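/- arXiv:1710.10425 — 4 statements merged into one kernel-verified Lean document; each statement's English description precedes it below -/
import Mathlib

section
/- Let σ be a real number and Φ_m = Γ(m+σ+1)/Γ(m-σ) for integers m. Then Φ_m > 0 for all integers m if and only if -1 < σ < 0. -/
/-!
Both arguments `m + σ + 1` and `m - σ` of `Φ_m` lie in the open interval `(m, m + 1)` when
`-1 < σ < 0`, and `Γ` has constant nonzero sign on each such interval, since `Γ x = Γ (x + 1) / x`
carries the sign from `(m + 1, m + 2)` down to `(m, m + 1)`. Conversely, for `σ ≥ 0` the index
`m = ⌊σ⌋₊` puts `m - σ` into `(-1, 0]`, where `Γ ≤ 0`, while `m + σ + 1 > 0`; the case `σ ≤ -1`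
reduces to this one because `σ ↦ -1 - σ` inverts every `Φ_m`.
-/

open Real Set

lemma Real.Gamma_div_Gamma_pos_of_mem_Ioo {n : ℤ} {x y : ℝ} (hx : x ∈ Ioo (n : ℝ) (n + 1))
    (hy : y ∈ Ioo (n : ℝ) (n + 1)) : 0 < Gamma x / Gamma y := by
  rcases le_or_gt 0 n with hn | hn
  · have hn' : (0 : ℝ) ≤ n := by exact_mod_cast hn
    exact div_pos (Gamma_pos_of_pos (by linarith [hx.1])) (Gamma_pos_of_pos (by linarith [hy.1]))
  replace hn := hn.le
  induction n, hn using Int.leInductionDown generalizing x y with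
  | base =>
    exact div_pos (Gamma_pos_of_pos (by simpa using hx.1)) (Gamma_pos_of_pos (by simpa using hy.1))
  | pred n hn ih =>
    push_cast at hx hy
    have hn' : (n : ℝ) ≤ 0 := by exact_mod_cast hn
    have hx0 : x < 0 := by linarith [hx.2]
    have hy0 : y < 0 := by linarith [hy.2]
    have hshift : Gamma (x + 1) / Gamma (y + 1) = x / y * (Gamma x / Gamma y) := by
      rw [Gamma_add_one hx0.ne, Gamma_add_one hy0.ne, mul_div_mul_comm]
    have hshifted : 0 < Gamma (x + 1) / Gamma (y + 1) :=
      ih ⟨by linarith [hx.1], by linarith [hx.2]⟩ ⟨by linarith [hy.1], by linarith [hy.2]⟩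
    exact pos_of_mul_pos_right (hshift ▸ hshifted) (div_pos_of_neg_of_neg hx0 hy0).le

lemma Real.Gamma_nonpos_of_mem_Ioc {x : ℝ} (hx : x ∈ Ioc (-1) 0) : Gamma x ≤ 0 := by
  rcases hx.2.lt_or_eq with hneg | rfl
  · have hpos : 0 < x * Gamma x := Gamma_add_one hneg.ne ▸ Gamma_pos_of_pos (by linarith [hx.1])
    exact (neg_of_mul_pos_right hpos hneg.le).le
  · exact Gamma_zero.le

/-- The paper's `Φ_m`. -/
noncomputable def gammaRatio (σ : ℝ) (m : ℤ) : ℝ := Gamma (m + σ + 1) / Gamma (m - σ)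

lemma gammaRatio_pos {σ : ℝ} (hσ : σ ∈ Ioo (-1) 0) (m : ℤ) : 0 < gammaRatio σ m :=
  Gamma_div_Gamma_pos_of_mem_Ioo (n := m) ⟨by linarith [hσ.1], by linarith [hσ.2]⟩
    ⟨by linarith [hσ.2], by linarith [hσ.1]⟩

lemma gammaRatio_natFloor_nonpos {σ : ℝ} (hσ : 0 ≤ σ) : gammaRatio σ ⌊σ⌋₊ ≤ 0 := by
  have hle : (⌊σ⌋₊ : ℝ) ≤ σ := Nat.floor_le hσ
  have hlt : σ < ⌊σ⌋₊ + 1 := Nat.lt_floor_add_one σ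
  unfold gammaRatio
  push_cast
  exact div_nonpos_of_nonneg_of_nonpos (Gamma_pos_of_pos (by linarith)).le
    (Gamma_nonpos_of_mem_Ioc ⟨by linarith, by linarith⟩)

lemma gammaRatio_neg_one_sub (σ : ℝ) (m : ℤ) : gammaRatio (-1 - σ) m = (gammaRatio σ m)⁻¹ := by
  unfold gammaRatio
  rw [inv_div]
  congr 2 <;> ring

theorem stmt2 (σ : ℝ) :
    (∀ m : ℤ, Real.Gamma ((m : ℝ) + σ + 1) / Real.Gamma ((m : ℝ) - σ) > 0) ↔
      (-1 < σ ∧ σ < 0) := by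
  refine ⟨fun h => ?_, fun hσ m => gammaRatio_pos hσ m⟩
  by_contra hσ
  obtain hσ0 | hσ1 : 0 ≤ σ ∨ σ ≤ -1 := by grind
  · exact (h _).not_ge (gammaRatio_natFloor_nonpos hσ0)
  · have hdual := gammaRatio_natFloor_nonpos (σ := -1 - σ) (by linarith)
    rw [gammaRatio_neg_one_sub, inv_nonpos] at hdual
    exact (h _).not_ge hdual
end

section
/- For complex σ and real α, the zonal function Z_σ(α) = (1/2π)∫₀^{2π} (cosh α - sinh α cos φ)^σ dφ satisfies the symmetry Z_{-1-σ}(α) = Z_σ(α). -/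
/-!
The integrand depends on `φ` through `cos φ` only, so both integrals over `[0, 2π]` are twice
those over `[0, π]`. There the angle `ψ` of the relativistic aberration,
`cos ψ = (cosh α cos φ + sinh α) / (cosh α + sinh α cos φ)`, is an increasing bijection of
`[0, π]` with `dψ/dφ = (cosh α + sinh α cos φ)⁻¹ = cosh α - sinh α cos ψ`. Substituting it turns
`∫ (cosh α - sinh α cos ψ)^σ dψ` into `∫ (cosh α + sinh α cos φ)^(-1-σ) dφ`, and the reflection
`φ ↦ π - φ` turns the latter into `∫ (cosh α - sinh α cos φ)^(-1-σ) dφ`.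
-/

open Real Set intervalIntegral

lemma cosh_sub_sinh_mul_pos (α : ℝ) {x : ℝ} (hx : |x| ≤ 1) : 0 < cosh α - sinh α * x := by
  have h : |sinh α * x| < cosh α := by
    rw [abs_mul, abs_sinh]
    calc sinh |α| * |x| ≤ sinh |α| :=
          mul_le_of_le_one_right (sinh_nonneg_iff.2 (abs_nonneg α)) hx
      _ < cosh |α| := sinh_lt_cosh _
      _ = cosh α := cosh_abs α
  linarith [le_abs_self (sinh α * x)]

lemma cosh_add_sinh_mul_cos_pos (α φ : ℝ) : 0 < cosh α + sinh α * cos φ := by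
  simpa using cosh_sub_sinh_mul_pos α (x := -cos φ) (by simpa using abs_cos_le_one φ)

lemma continuous_ofReal_cosh_sub_sinh_mul_cos_cpow (α : ℝ) (τ : ℂ) :
    Continuous fun φ : ℝ => ((cosh α - sinh α * cos φ : ℝ) : ℂ) ^ τ :=
  (by fun_prop : Continuous fun φ : ℝ => ((cosh α - sinh α * cos φ : ℝ) : ℂ)).cpow
    continuous_const fun φ => Complex.ofReal_mem_slitPlane.2 <|
      cosh_sub_sinh_mul_pos α (abs_cos_le_one φ)

section CosIntegrals

variable {E : Type*} [NormedAddCommGroup E] [NormedSpace ℝ E]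

lemma integral_comp_neg_cos_zero_pi (F : ℝ → E) :
    ∫ φ in 0..π, F (-cos φ) = ∫ φ in 0..π, F (cos φ) := by
  simpa using integral_comp_sub_left (fun φ => F (cos φ)) π (a := 0) (b := π)

lemma integral_comp_cos_zero_two_pi {F : ℝ → E} (hF : Continuous fun φ => F (cos φ)) :
    ∫ φ in 0..2 * π, F (cos φ) = (2 : ℝ) • ∫ φ in 0..π, F (cos φ) := by
  have h2π : ∫ φ in π..2 * π, F (cos φ) = ∫ φ in 0..π, F (cos φ) := by
    have := integral_comp_sub_left (fun φ => F (cos φ)) (2 * π) (a := 0) (b := π)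
    simp only [cos_two_pi_sub, sub_zero] at this
    rw [this, two_mul, add_sub_cancel_right]
  rw [← integral_add_adjacent_intervals (hF.intervalIntegrable 0 π) (hF.intervalIntegrable π _),
    h2π, two_smul]

end CosIntegrals

-- The relativistic aberration formula for a boost of rapidity `α`.
noncomputable def aberrationCos (α φ : ℝ) : ℝ :=
  (cosh α * cos φ + sinh α) / (cosh α + sinh α * cos φ)

noncomputable def aberration (α φ : ℝ) : ℝ :=
  arccos (aberrationCos α φ)

section Aberration

variable (α : ℝ)

lemma one_sub_aberrationCos_sq (φ : ℝ) :
    1 - aberrationCos α φ ^ 2 = (sin φ / (cosh α + sinh α * cos φ)) ^ 2 := by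
  have hu := (cosh_add_sinh_mul_cos_pos α φ).ne'
  rw [aberrationCos, div_pow, div_pow, eq_div_iff (pow_ne_zero 2 hu), sub_mul,
    div_mul_cancel₀ _ (pow_ne_zero 2 hu)]
  linear_combination (1 - cos φ ^ 2) * cosh_sq_sub_sinh_sq α - sin_sq_add_cos_sq φ

lemma aberrationCos_mem_Icc (φ : ℝ) : aberrationCos α φ ∈ Icc (-1) 1 := by
  rw [mem_Icc, ← abs_le, ← sq_le_one_iff_abs_le_one]
  nlinarith [one_sub_aberrationCos_sq α φ, sq_nonneg (sin φ / (cosh α + sinh α * cos φ))]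

lemma cosh_sub_sinh_mul_aberrationCos (φ : ℝ) :
    cosh α - sinh α * aberrationCos α φ = (cosh α + sinh α * cos φ)⁻¹ := by
  have hu := (cosh_add_sinh_mul_cos_pos α φ).ne'
  rw [aberrationCos]
  field_simp
  linear_combination cosh_sq_sub_sinh_sq α

lemma aberration_zero : aberration α 0 = 0 := by
  simp [aberration, aberrationCos]

lemma aberration_pi : aberration α π = π := by
  have hu := (cosh_add_sinh_mul_cos_pos α π).ne'
  have h : aberrationCos α π = -1 := by
    rw [aberrationCos, div_eq_iff hu, cos_pi]
    ring
  rw [aberration, h, arccos_neg_one]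

lemma continuous_aberration : Continuous (aberration α) :=
  continuous_arccos.comp <|
    Continuous.div (by fun_prop) (by fun_prop) fun φ => (cosh_add_sinh_mul_cos_pos α φ).ne'

lemma hasDerivAt_aberrationCos (φ : ℝ) :
    HasDerivAt (aberrationCos α) (-sin φ / (cosh α + sinh α * cos φ) ^ 2) φ := by
  have hu := (cosh_add_sinh_mul_cos_pos α φ).ne'
  refine ((((hasDerivAt_cos φ).const_mul (cosh α)).add_const (sinh α)).div
    (((hasDerivAt_cos φ).const_mul (sinh α)).const_add (cosh α)) hu).congr_deriv ?_
  congr 1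
  linear_combination -sin φ * cosh_sq_sub_sinh_sq α

lemma hasDerivAt_aberration {φ : ℝ} (hφ : φ ∈ Ioo 0 π) :
    HasDerivAt (aberration α) (cosh α + sinh α * cos φ)⁻¹ φ := by
  have hu := cosh_add_sinh_mul_cos_pos α φ
  have hsin := sin_pos_of_pos_of_lt_pi hφ.1 hφ.2
  have hlt : aberrationCos α φ ^ 2 < 1 := by
    nlinarith [one_sub_aberrationCos_sq α φ, pow_pos (div_pos hsin hu) 2]
  have hne : aberrationCos α φ ≠ -1 ∧ aberrationCos α φ ≠ 1 := by
    constructor <;> rintro h <;> norm_num [h] at hlt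
  refine ((hasDerivAt_arccos hne.1 hne.2).comp φ (hasDerivAt_aberrationCos α φ)).congr_deriv ?_
  rw [one_sub_aberrationCos_sq, sqrt_sq (div_pos hsin hu).le]
  field_simp

lemma cosh_sub_sinh_mul_cos_aberration (φ : ℝ) :
    cosh α - sinh α * cos (aberration α φ) = (cosh α + sinh α * cos φ)⁻¹ := by
  rw [aberration, cos_arccos (aberrationCos_mem_Icc α φ).1 (aberrationCos_mem_Icc α φ).2,
    cosh_sub_sinh_mul_aberrationCos]

end Aberration

lemma Complex.ofReal_cpow_neg_one_sub {x : ℝ} (hx : 0 < x) (σ : ℂ) :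
    (x : ℂ) ^ (-1 - σ) = x⁻¹ • ((x⁻¹ : ℝ) : ℂ) ^ σ := by
  rw [real_smul, ofReal_inv, inv_cpow_ofReal_nonneg hx.le, sub_eq_add_neg,
    cpow_add _ _ (ofReal_ne_zero.2 hx.ne'), cpow_neg_one, cpow_neg]

lemma integral_cosh_add_sinh_mul_cos_cpow_neg_one_sub (α : ℝ) (σ : ℂ) :
    ∫ φ in 0..π, ((cosh α + sinh α * cos φ : ℝ) : ℂ) ^ (-1 - σ)
      = ∫ ψ in 0..π, ((cosh α - sinh α * cos ψ : ℝ) : ℂ) ^ σ := by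
  have subst := integral_deriv_smul_comp_of_deriv_nonneg (a := 0) (b := π)
    (g := fun ψ => ((cosh α - sinh α * cos ψ : ℝ) : ℂ) ^ σ)
    (continuous_aberration α).continuousOn
    (by simpa [pi_pos.le] using fun φ hφ => hasDerivAt_aberration α hφ)
    (fun φ _ => (inv_pos.2 (cosh_add_sinh_mul_cos_pos α φ)).le)
  rw [aberration_zero, aberration_pi] at subst
  rw [← subst]
  refine integral_congr fun φ _ => ?_
  rw [Function.comp_apply, cosh_sub_sinh_mul_cos_aberration,
    Complex.ofReal_cpow_neg_one_sub (cosh_add_sinh_mul_cos_pos α φ)]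

theorem stmt5 (σ : ℂ) (α : ℝ) :
    (1 / (2 * (Real.pi : ℂ))) *
        ∫ φ in (0:ℝ)..(2 * Real.pi),
          ((Real.cosh α - Real.sinh α * Real.cos φ : ℝ) : ℂ) ^ (-1 - σ) =
      (1 / (2 * (Real.pi : ℂ))) *
        ∫ φ in (0:ℝ)..(2 * Real.pi),
          ((Real.cosh α - Real.sinh α * Real.cos φ : ℝ) : ℂ) ^ σ := by
  have halve (τ : ℂ) := integral_comp_cos_zero_two_pi
    (F := fun x => ((cosh α - sinh α * x : ℝ) : ℂ) ^ τ)
    (continuous_ofReal_cosh_sub_sinh_mul_cos_cpow α τ)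
  have reflect := integral_comp_neg_cos_zero_pi
    fun x => ((cosh α - sinh α * x : ℝ) : ℂ) ^ (-1 - σ)
  simp only [mul_neg, sub_neg_eq_add] at reflect
  rw [halve, halve, ← reflect, integral_cosh_add_sinh_mul_cos_cpow_neg_one_sub]
end

section
/- For complex σ, real α with |tanh α| < 1, and nonnegative integer m, the associated spherical function P_{σ,m}(α) = (1/2π)∫₀^{2π}(cosh α - sinh α cos φ)^σ e^{imφ} dφ equals ((-σ)_m / (2^m m!)) (cosh α)^σ (tanh α)^m · ₂F₁((m-σ)/2, (m-σ+1)/2; m+1; tanh²α). -/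
/-!
Write `cosh α - sinh α cos φ = cosh α (1 - t cos φ)` with `t = tanh α`. Since
`|t cos φ| ≤ |t| < 1`, the binomial series of `(1 - t cos φ)^σ` is dominated by the convergent
series `∑ ‖(-σ)_k / k!‖ |t|^k`, so it can be integrated termwise. The `m`-th Fourier coefficient
of `cos^k φ` vanishes unless `k = m + 2n`, in which case it is `binom(m + 2n, n) / 2^(m + 2n)`;
the duplication formula `(x)_{2n} = 4^n (x/2)_n ((x+1)/2)_n` turns the surviving coefficients
into those of `₂F₁`.
-/

open Complex MeasureTheory

/-- Rising Pochhammer symbol `(x)_n`. -/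
noncomputable def poch (x : ℂ) (n : ℕ) : ℂ := (ascPochhammer ℂ n).eval x

/-- Gauss hypergeometric series `₂F₁(a,b;c;z)`. -/
noncomputable def twoF1 (a b c z : ℂ) : ℂ :=
  ∑' n : ℕ, poch a n * poch b n / (poch c n * (n.factorial : ℂ)) * z ^ n

@[simp] lemma poch_zero (x : ℂ) : poch x 0 = 1 := by simp [poch]

lemma poch_succ (x : ℂ) (n : ℕ) : poch x (n + 1) = poch x n * (x + n) := by
  simp [poch, ascPochhammer_succ_eval]

lemma poch_add (x : ℂ) (a b : ℕ) : poch x (a + b) = poch x a * poch (x + a) b := by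
  induction b with
  | zero => simp
  | succ b ih => rw [← add_assoc, poch_succ, ih, poch_succ]; push_cast; ring

lemma poch_two_mul (x : ℂ) (n : ℕ) :
    poch x (2 * n) = 4 ^ n * poch (x / 2) n * poch ((x + 1) / 2) n := by
  induction n with
  | zero => simp
  | succ n ih =>
    rw [mul_add_one, poch_succ, poch_succ, ih, poch_succ, poch_succ]
    push_cast
    ring

lemma poch_natCast_add_one_mul_factorial (m n : ℕ) :
    poch ((m : ℂ) + 1) n * m.factorial = (m + n).factorial := by
  induction n with
  | zero => simp
  | succ n ih =>
    rw [poch_succ, mul_right_comm, ih, ← add_assoc, Nat.factorial_succ]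
    push_cast
    ring

lemma poch_natCast_add_one_ne_zero (m n : ℕ) : poch ((m : ℂ) + 1) n ≠ 0 :=
  left_ne_zero_of_mul <| (poch_natCast_add_one_mul_factorial m n).trans_ne <|
    Nat.cast_ne_zero.2 (Nat.factorial_ne_zero _)

lemma poch_add_two_mul_div_factorial_mul_choose (x : ℂ) (m n : ℕ) :
    poch x (m + 2 * n) / (m + 2 * n).factorial * (m + 2 * n).choose n / 2 ^ (m + 2 * n) =
      poch x m / (2 ^ m * m.factorial) *
        (poch ((x + m) / 2) n * poch ((x + m + 1) / 2) n /
          (poch ((m : ℂ) + 1) n * n.factorial)) := by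
  have hpoch : poch x (m + 2 * n) =
      poch x m * (4 ^ n * poch ((x + m) / 2) n * poch ((x + m + 1) / 2) n) := by
    rw [poch_add, poch_two_mul]
  have hfact : ((m + 2 * n).factorial : ℂ) =
      (m + 2 * n).choose n * n.factorial * (poch ((m : ℂ) + 1) n * m.factorial) := by
    rw [poch_natCast_add_one_mul_factorial,
      ← Nat.choose_mul_factorial_mul_factorial (by omega : n ≤ m + 2 * n),
      show m + 2 * n - n = m + n by omega]
    push_cast; ring
  have hchoose : ((m + 2 * n).choose n : ℂ) ≠ 0 := by
    exact_mod_cast (Nat.choose_pos (by omega)).ne'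
  have := poch_natCast_add_one_ne_zero m n
  rw [hpoch, hfact, pow_add, pow_mul]
  field_simp
  ring

lemma poch_neg_div_factorial (a : ℂ) (n : ℕ) :
    poch (-a) n / n.factorial = (-1) ^ n * Ring.choose a n := by
  rw [poch, ← Polynomial.ascPochhammer_smeval_eq_eval,
    Polynomial.ascPochhammer_smeval_neg_eq_descPochhammer, Ring.choose_eq_smul, Int.negOnePow_def,
    Units.smul_def, smul_eq_mul]
  simp only [zpow_natCast, Units.val_pow_eq_pow_val, Units.val_neg, Units.val_one, zsmul_eq_mul,
    Int.cast_pow, Int.cast_neg, Int.cast_one]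
  ring

lemma hasFPowerSeriesOnBall_one_sub_cpow (a : ℂ) :
    HasFPowerSeriesOnBall (fun x => (1 - x) ^ a)
      (.ofScalars ℂ fun n => poch (-a) n / n.factorial) 0 1 := by
  have H : (binomialSeries ℂ a).compContinuousLinearMap (-1) =
      .ofScalars ℂ fun n => poch (-a) n / n.factorial := by
    ext n
    simp [FormalMultilinearSeries.compContinuousLinearMap, binomialSeries, poch_neg_div_factorial]
  have : HasFPowerSeriesOnBall (fun x ↦ (1 + x) ^ a) (binomialSeries ℂ a) (-0) 1 := by
    simpa using one_add_cpow_hasFPowerSeriesOnBall_zero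
  simpa [Function.comp_def, ← sub_eq_add_neg, H] using
    this.compContinuousLinearMap (u := -1) (x := (0 : ℂ))

lemma mem_eball_zero_one_iff {E : Type*} [SeminormedAddGroup E] (x : E) :
    x ∈ Metric.eball (0 : E) 1 ↔ ‖x‖ < 1 := by
  rw [← ENNReal.ofReal_one, Metric.eball_ofReal, mem_ball_zero_iff]

lemma hasSum_one_sub_cpow (a : ℂ) {x : ℂ} (hx : ‖x‖ < 1) :
    HasSum (fun n => poch (-a) n / n.factorial * x ^ n) ((1 - x) ^ a) := by
  have h := (hasFPowerSeriesOnBall_one_sub_cpow a).hasSum ((mem_eball_zero_one_iff x).2 hx)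
  rwa [FormalMultilinearSeries.ofScalars_apply_eq', zero_add] at h

lemma summable_norm_poch_neg_div_factorial_mul_pow (a : ℂ) {r : ℝ} (hr₀ : 0 ≤ r)
    (hr : r < 1) :
    Summable fun n => ‖poch (-a) n / n.factorial‖ * r ^ n := by
  have hr_mem := Metric.eball_subset_eball (hasFPowerSeriesOnBall_one_sub_cpow a).r_le
    ((mem_eball_zero_one_iff (r : ℂ)).2 (by simpa [abs_of_nonneg hr₀] using hr))
  simpa [FormalMultilinearSeries.ofScalars_apply_eq', abs_of_nonneg hr₀, mul_comm] using
    FormalMultilinearSeries.summable_norm_apply _ hr_mem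

lemma integral_exp_int_mul_I (n : ℤ) :
    ∫ φ in (0:ℝ)..(2 * Real.pi), exp (n * I * φ) =
      if n = 0 then 2 * (Real.pi : ℂ) else 0 := by
  split_ifs with hn
  · simp [hn]
  · have hc : (n : ℂ) * I ≠ 0 := by simp [hn]
    rw [integral_exp_mul_complex hc,
      show (n : ℂ) * I * ↑(2 * Real.pi) = n * (2 * Real.pi * I) by push_cast; ring,
      exp_int_mul_two_pi_mul_I]
    simp

lemma cos_pow_mul_exp_eq_sum (k m : ℕ) (φ : ℝ) :
    (Real.cos φ : ℂ) ^ k * exp (I * m * φ) =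
      ∑ j ∈ Finset.range (k + 1),
        (k.choose j : ℂ) / 2 ^ k * exp ((2 * j + m - k : ℤ) * I * φ) := by
  rw [ofReal_cos, cos, div_pow, add_pow, div_mul_eq_mul_div, Finset.sum_mul, Finset.sum_div]
  refine Finset.sum_congr rfl fun j hj => ?_
  rw [Finset.mem_range, Nat.lt_succ_iff] at hj
  rw [← exp_nat_mul, ← exp_nat_mul, mul_right_comm _ _ (exp _), ← exp_add, ← exp_add]
  push_cast [hj]
  ring_nf

lemma integral_cos_pow_mul_exp (k m : ℕ) :
    ∫ φ in (0:ℝ)..(2 * Real.pi), (Real.cos φ : ℂ) ^ k * exp (I * m * φ) =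
      2 * (Real.pi : ℂ) / 2 ^ k *
        ∑ j ∈ Finset.range (k + 1), if 2 * j + m = k then (k.choose j : ℂ) else 0 := by
  simp_rw [cos_pow_mul_exp_eq_sum]
  rw [intervalIntegral.integral_finsetSum
    fun j _ => (by fun_prop : Continuous _).intervalIntegrable _ _, Finset.mul_sum]
  refine Finset.sum_congr rfl fun j _ => ?_
  have hfreq : (2 * j + m - k : ℤ) = 0 ↔ 2 * j + m = k := by omega
  rw [intervalIntegral.integral_const_mul, integral_exp_int_mul_I, if_congr hfreq rfl rfl]
  split_ifs <;> ring

lemma integral_cos_pow_add_two_mul_mul_exp (m n : ℕ) :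
    ∫ φ in (0:ℝ)..(2 * Real.pi), (Real.cos φ : ℂ) ^ (m + 2 * n) * exp (I * m * φ) =
      2 * (Real.pi : ℂ) / 2 ^ (m + 2 * n) * (m + 2 * n).choose n := by
  rw [integral_cos_pow_mul_exp, Finset.sum_eq_single n (fun j _ hj => if_neg (by omega))
    (fun hn => (hn (Finset.mem_range.2 (by omega))).elim), if_pos (by omega)]

lemma integral_cos_pow_mul_exp_eq_zero {k m : ℕ} (hk : ∀ n, m + 2 * n ≠ k) :
    ∫ φ in (0:ℝ)..(2 * Real.pi), (Real.cos φ : ℂ) ^ k * exp (I * m * φ) = 0 := by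
  rw [integral_cos_pow_mul_exp, Finset.sum_eq_zero fun j _ => if_neg (by grind), mul_zero]

lemma abs_mul_cos_le (t φ : ℝ) : |t * Real.cos φ| ≤ |t| := by
  simpa [abs_mul] using mul_le_mul_of_nonneg_left (Real.abs_cos_le_one φ) (abs_nonneg t)

lemma hasSum_integral_cpow_one_sub_mul_cos_mul_exp (σ : ℂ) {t : ℝ} (ht : |t| < 1) (m : ℕ) :
    HasSum (fun k => poch (-σ) k / k.factorial * (t : ℂ) ^ k *
        ∫ φ in (0:ℝ)..(2 * Real.pi), (Real.cos φ : ℂ) ^ k * exp (I * m * φ))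
      (∫ φ in (0:ℝ)..(2 * Real.pi),
        ((1 - t * Real.cos φ : ℝ) : ℂ) ^ σ * exp (I * m * φ)) := by
  have hterm : ∀ k : ℕ, poch (-σ) k / k.factorial * (t : ℂ) ^ k *
      ∫ φ in (0:ℝ)..(2 * Real.pi), (Real.cos φ : ℂ) ^ k * exp (I * m * φ) =
      ∫ φ in (0:ℝ)..(2 * Real.pi),
        poch (-σ) k / k.factorial * ((t * Real.cos φ : ℝ) : ℂ) ^ k * exp (I * m * φ) := by
    intro k
    rw [← intervalIntegral.integral_const_mul]
    congr 1 with φ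
    push_cast
    ring
  simp_rw [hterm]
  refine intervalIntegral.hasSum_integral_of_dominated_convergence
    (fun k _ => ‖poch (-σ) k / k.factorial‖ * |t| ^ k)
    (fun k => (by fun_prop : Continuous _).aestronglyMeasurable)
    (fun k => ae_of_all _ fun φ _ => ?_)
    (ae_of_all _ fun _ _ => summable_norm_poch_neg_div_factorial_mul_pow σ (abs_nonneg t) ht)
    intervalIntegrable_const (ae_of_all _ fun φ _ => ?_)
  · have hexp : ‖exp (I * m * φ)‖ = 1 := by simp [norm_exp]
    rw [norm_mul, norm_mul, norm_pow, norm_real, Real.norm_eq_abs, hexp, mul_one]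
    exact mul_le_mul_of_nonneg_left (pow_le_pow_left₀ (abs_nonneg _) (abs_mul_cos_le t φ) k)
      (norm_nonneg _)
  · have hx : ‖((t * Real.cos φ : ℝ) : ℂ)‖ < 1 := by
      rw [norm_real, Real.norm_eq_abs]; exact (abs_mul_cos_le t φ).trans_lt ht
    have := (hasSum_one_sub_cpow σ hx).mul_right (exp (I * m * φ))
    push_cast at this ⊢
    exact this

lemma integral_cpow_one_sub_mul_cos_mul_exp (σ : ℂ) {t : ℝ} (ht : |t| < 1) (m : ℕ) :
    ∫ φ in (0:ℝ)..(2 * Real.pi), ((1 - t * Real.cos φ : ℝ) : ℂ) ^ σ * exp (I * m * φ) =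
      2 * Real.pi * (poch (-σ) m / (2 ^ m * m.factorial) * (t : ℂ) ^ m) *
        twoF1 (((m : ℂ) - σ) / 2) (((m : ℂ) - σ + 1) / 2) ((m : ℂ) + 1)
          ((t ^ 2 : ℝ) : ℂ) := by
  have hinj : Function.Injective fun n : ℕ => m + 2 * n :=
    (add_right_injective m).comp (mul_right_injective₀ two_ne_zero)
  have h := hasSum_integral_cpow_one_sub_mul_cos_mul_exp σ ht m
  rw [← hinj.hasSum_iff fun k hk => by
    rw [integral_cos_pow_mul_exp_eq_zero fun n hn => hk ⟨n, hn⟩, mul_zero]] at h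
  rw [← h.tsum_eq, twoF1, ← tsum_mul_left]
  congr 1 with n
  have hcoeff := poch_add_two_mul_div_factorial_mul_choose (-σ) m n
  rw [show -σ + m = m - σ by ring] at hcoeff
  simp only [Function.comp_apply, integral_cos_pow_add_two_mul_mul_exp]
  rw [ofReal_pow, ← pow_mul]
  linear_combination (2 * Real.pi * (t : ℂ) ^ (m + 2 * n)) * hcoeff

theorem stmt6 (σ : ℂ) (α : ℝ) (h : |Real.tanh α| < 1) (m : ℕ) :
    (1 / (2 * (Real.pi : ℂ))) *
        ∫ φ in (0:ℝ)..(2 * Real.pi),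
          ((Real.cosh α - Real.sinh α * Real.cos φ : ℝ) : ℂ) ^ σ *
            Complex.exp (Complex.I * m * φ) =
      poch (-σ) m / (2 ^ m * (m.factorial : ℂ)) *
        ((Real.cosh α : ℝ) : ℂ) ^ σ * ((Real.tanh α : ℝ) : ℂ) ^ m *
        twoF1 (((m : ℂ) - σ) / 2) (((m : ℂ) - σ + 1) / 2) ((m : ℂ) + 1)
          (((Real.tanh α)^2 : ℝ) : ℂ) := by
  have hfactor : ∀ φ, ((Real.cosh α - Real.sinh α * Real.cos φ : ℝ) : ℂ) ^ σ =
      (Real.cosh α : ℂ) ^ σ * ((1 - Real.tanh α * Real.cos φ : ℝ) : ℂ) ^ σ := by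
    intro φ
    have hpos : 0 ≤ 1 - Real.tanh α * Real.cos φ := by
      linarith [le_abs_self (Real.tanh α * Real.cos φ), abs_mul_cos_le (Real.tanh α) φ]
    rw [← mul_cpow_ofReal_nonneg (Real.cosh_pos α).le hpos, ← ofReal_mul,
      Real.tanh_eq_sinh_div_cosh]
    congr 2
    field_simp
  simp only [hfactor, mul_assoc ((Real.cosh α : ℂ) ^ σ), intervalIntegral.integral_const_mul,
    integral_cpow_one_sub_mul_cos_mul_exp σ h m]
  field_simp
end

section
/- The function K⁽³⁾(φ₁,φ₂,φ₃) = [1-cos(φ₁-φ₂)]^{β₃}[1-cos(φ₂-φ₃)]^{β₁}[1-cos(φ₃-φ₁)]^{β₂}, with β₁ = (σ₁-σ₂-σ₃-1)/2, β₂ = (σ₂-σ₃-σ₁-1)/2, β₃ = (σ₃-σ₁-σ₂-1)/2, satisfies K⁽³⁾(φ_{1α},φ_{2α},φ_{3α}) = ω_α(φ₁)^{σ₁+1} ω_α(φ₂)^{σ₂+1} ω_α(φ₃)^{σ₃+1} K⁽³⁾(φ₁,φ₂,φ₃) for all real α. -/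
/-!
Under the boost each factor `1 - cos (φ_i - φ_j)` is divided by `ω_α(φ_i) ω_α(φ_j)`. Every angle
occurs in two factors, whose exponents add up to `-(σ_i + 1)`, so the weights collect into
`ω_α(φ_i) ^ (σ_i + 1)`. Since `ω_α > 0` and `1 - cos ≥ 0`, the complex powers of these real
numbers split over products and quotients.
-/

open Real

lemma cosh_sub_sinh_mul_cos_pos (α φ : ℝ) : 0 < cosh α - sinh α * cos φ := by
  have hcos : sinh α * cos φ ≤ |sinh α| := by
    calc sinh α * cos φ ≤ |sinh α * cos φ| := le_abs_self _
      _ ≤ |sinh α| := by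
        rw [abs_mul]; exact mul_le_of_le_one_right (abs_nonneg _) (abs_cos_le_one φ)
  have hsinh : |sinh α| < cosh α := by
    rw [abs_sinh, ← cosh_abs]; exact sinh_lt_cosh _
  linarith

lemma one_sub_cos_sub_eq_div {α a b x y : ℝ}
    (hsx : sin x = sin a / (cosh α - sinh α * cos a))
    (hcx : cos x = (-sinh α + cosh α * cos a) / (cosh α - sinh α * cos a))
    (hsy : sin y = sin b / (cosh α - sinh α * cos b))
    (hcy : cos y = (-sinh α + cosh α * cos b) / (cosh α - sinh α * cos b)) :
    1 - cos (x - y) =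
      (1 - cos (a - b)) / ((cosh α - sinh α * cos a) * (cosh α - sinh α * cos b)) := by
  have ha := cosh_sub_sinh_mul_cos_pos α a
  have hb := cosh_sub_sinh_mul_cos_pos α b
  rw [cos_sub, cos_sub, hsx, hcx, hsy, hcy]
  field_simp
  linear_combination (1 - cos a * cos b) * cosh_sq_sub_sinh_sq α

lemma ofReal_div_mul_cpow {x a b : ℝ} (hx : 0 ≤ x) (ha : 0 ≤ a) (hb : 0 ≤ b) (s : ℂ) :
    ((x / (a * b) : ℝ) : ℂ) ^ s = (x : ℂ) ^ s / ((a : ℂ) ^ s * (b : ℂ) ^ s) := by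
  rw [Complex.ofReal_div, Complex.div_cpow_ofReal_nonneg hx (mul_nonneg ha hb),
    Complex.ofReal_mul, Complex.mul_cpow_ofReal_nonneg ha hb]

/-- With `x_ij = 1 - cos (φ_i - φ_j)` this is the kernel `K⁽³⁾(φ₁, φ₂, φ₃)`. -/
noncomputable def threePointKernel (σ₁ σ₂ σ₃ : ℂ) (x₁₂ x₂₃ x₃₁ : ℝ) : ℂ :=
  (x₁₂ : ℂ) ^ ((σ₃ - σ₁ - σ₂ - 1) / 2) * (x₂₃ : ℂ) ^ ((σ₁ - σ₂ - σ₃ - 1) / 2) *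
    (x₃₁ : ℂ) ^ ((σ₂ - σ₃ - σ₁ - 1) / 2)

lemma threePointKernel_div_mul (σ₁ σ₂ σ₃ : ℂ) {w₁ w₂ w₃ x₁₂ x₂₃ x₃₁ : ℝ}
    (hw₁ : 0 < w₁) (hw₂ : 0 < w₂) (hw₃ : 0 < w₃)
    (hx₁₂ : 0 ≤ x₁₂) (hx₂₃ : 0 ≤ x₂₃) (hx₃₁ : 0 ≤ x₃₁) :
    threePointKernel σ₁ σ₂ σ₃ (x₁₂ / (w₁ * w₂)) (x₂₃ / (w₂ * w₃)) (x₃₁ / (w₃ * w₁)) =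
      (w₁ : ℂ) ^ (σ₁ + 1) * (w₂ : ℂ) ^ (σ₂ + 1) * (w₃ : ℂ) ^ (σ₃ + 1) *
        threePointKernel σ₁ σ₂ σ₃ x₁₂ x₂₃ x₃₁ := by
  have hw₁' : (w₁ : ℂ) ≠ 0 := by exact_mod_cast hw₁.ne'
  have hw₂' : (w₂ : ℂ) ≠ 0 := by exact_mod_cast hw₂.ne'
  have hw₃' : (w₃ : ℂ) ≠ 0 := by exact_mod_cast hw₃.ne'
  simp only [threePointKernel, ofReal_div_mul_cpow hx₁₂ hw₁.le hw₂.le,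
    ofReal_div_mul_cpow hx₂₃ hw₂.le hw₃.le, ofReal_div_mul_cpow hx₃₁ hw₃.le hw₁.le]
  set β₁ := (σ₁ - σ₂ - σ₃ - 1) / 2
  set β₂ := (σ₂ - σ₃ - σ₁ - 1) / 2
  set β₃ := (σ₃ - σ₁ - σ₂ - 1) / 2
  have hσ₁ : σ₁ + 1 = -β₂ + -β₃ := by ring
  have hσ₂ : σ₂ + 1 = -β₃ + -β₁ := by ring
  have hσ₃ : σ₃ + 1 = -β₁ + -β₂ := by ring
  rw [hσ₁, hσ₂, hσ₃, Complex.cpow_add _ _ hw₁', Complex.cpow_add _ _ hw₂',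
    Complex.cpow_add _ _ hw₃', Complex.cpow_neg, Complex.cpow_neg, Complex.cpow_neg,
    Complex.cpow_neg, Complex.cpow_neg, Complex.cpow_neg]
  ring

theorem stmt14 (σ₁ σ₂ σ₃ : ℂ) (Φ : ℝ → ℝ → ℝ)
    (hsin : ∀ α φ, Real.sin (Φ α φ) =
      Real.sin φ / (Real.cosh α - Real.sinh α * Real.cos φ))
    (hcos : ∀ α φ, Real.cos (Φ α φ) =
      (-Real.sinh α + Real.cosh α * Real.cos φ) /
        (Real.cosh α - Real.sinh α * Real.cos φ))
    (α φ₁ φ₂ φ₃ : ℝ) :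
    ((1 - Real.cos (Φ α φ₁ - Φ α φ₂) : ℝ) : ℂ) ^ ((σ₃ - σ₁ - σ₂ - 1) / 2) *
        ((1 - Real.cos (Φ α φ₂ - Φ α φ₃) : ℝ) : ℂ) ^ ((σ₁ - σ₂ - σ₃ - 1) / 2) *
        ((1 - Real.cos (Φ α φ₃ - Φ α φ₁) : ℝ) : ℂ) ^ ((σ₂ - σ₃ - σ₁ - 1) / 2) =
      ((Real.cosh α - Real.sinh α * Real.cos φ₁ : ℝ) : ℂ) ^ (σ₁ + 1) *
        ((Real.cosh α - Real.sinh α * Real.cos φ₂ : ℝ) : ℂ) ^ (σ₂ + 1) *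
        ((Real.cosh α - Real.sinh α * Real.cos φ₃ : ℝ) : ℂ) ^ (σ₃ + 1) *
        (((1 - Real.cos (φ₁ - φ₂) : ℝ) : ℂ) ^ ((σ₃ - σ₁ - σ₂ - 1) / 2) *
          ((1 - Real.cos (φ₂ - φ₃) : ℝ) : ℂ) ^ ((σ₁ - σ₂ - σ₃ - 1) / 2) *
          ((1 - Real.cos (φ₃ - φ₁) : ℝ) : ℂ) ^ ((σ₂ - σ₃ - σ₁ - 1) / 2)) := by
  rw [one_sub_cos_sub_eq_div (hsin α φ₁) (hcos α φ₁) (hsin α φ₂) (hcos α φ₂),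
    one_sub_cos_sub_eq_div (hsin α φ₂) (hcos α φ₂) (hsin α φ₃) (hcos α φ₃),
    one_sub_cos_sub_eq_div (hsin α φ₃) (hcos α φ₃) (hsin α φ₁) (hcos α φ₁)]
  exact threePointKernel_div_mul σ₁ σ₂ σ₃ (cosh_sub_sinh_mul_cos_pos α φ₁)
    (cosh_sub_sinh_mul_cos_pos α φ₂) (cosh_sub_sinh_mul_cos_pos α φ₃)
    (sub_nonneg.2 (cos_le_one _)) (sub_nonneg.2 (cos_le_one _)) (sub_nonneg.2 (cos_le_one _))
end
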